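/- Let I_r, I_θ ⊆ ℝ be open intervals, let β₁, β₃ : I_θ → ℝ and β₂ : I_r → ℝ be smooth with β₁ nowhere vanishing and β₂′ nowhere vanishing, and set β(r,θ) = β₁(θ)β₂(r) + β₃(θ); assume β is nowhere vanishing on I_r × I_θ. Let G : I_r × I_θ → ℝ be smooth and define G̃ = G·β/β₁. Then the integrability condition ∂_θ( G + (∂_r ln β)⁻¹ · ∂_r G ) = 0 holds on I_r × I_θ if and only if ∂_θ∂_r G̃ = 0 on I_r × I_θ, which in turn holds if and only if there exist smooth functions G_r : I_r → ℝ and G_θ : I_θ → ℝ with G̃(r,θ) = G_r(r) + G_θ(θ). (In fact G + (∂_r ln β)⁻¹·∂_r G = (∂_r G̃)/β₂′ identically.) -/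

import Mathlib

open Real

noncomputable section

private lemma constOfDeriv {s : Set ℝ} (hs : Convex ℝ s) (hso : IsOpen s) {f : ℝ → ℝ}
    (hf : ∀ x ∈ s, HasDerivAt f 0 x) {x y : ℝ} (hx : x ∈ s) (hy : y ∈ s) : f x = f y := by
  refine hs.is_const_of_fderivWithin_eq_zero
    (fun z hz => ((hf z hz).differentiableAt).differentiableWithinAt) (fun z hz => ?_) hx hy
  rw [fderivWithin_of_isOpen hso hz, (hf z hz).hasFDerivAt.fderiv]
  ext
  simp

/-- For a separable `θθ`-coefficient
`β(r,θ) = β₁(θ)β₂(r) + β₃(θ)` and `G̃ = G·β/β₁`, the integrability condition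
`∂_θ(G + (∂_r ln β)⁻¹·∂_r G) = 0` holds iff `∂_θ∂_r G̃ = 0`, which holds iff
`G̃(r,θ) = G_r(r) + G_θ(θ)` for smooth `G_r`, `G_θ`; moreover
`G + (∂_r ln β)⁻¹·∂_r G = (∂_r G̃)/β₂′` identically. -/
theorem integrability_condition_separable
    (Ir Iθ : Set ℝ) (hIrOpen : IsOpen Ir) (hIθOpen : IsOpen Iθ)
    (hIrConn : Ir.OrdConnected) (hIθConn : Iθ.OrdConnected)
    (β₁ β₃ β₂ : ℝ → ℝ)
    (hβ₁ : ContDiffOn ℝ (⊤ : ℕ∞) β₁ Iθ) (hβ₃ : ContDiffOn ℝ (⊤ : ℕ∞) β₃ Iθ)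
    (hβ₂ : ContDiffOn ℝ (⊤ : ℕ∞) β₂ Ir)
    (hβ₁ne : ∀ θ ∈ Iθ, β₁ θ ≠ 0)
    (hβ₂' : ∀ r ∈ Ir, deriv β₂ r ≠ 0)
    (β : ℝ → ℝ → ℝ) (hβdef : ∀ r θ, β r θ = β₁ θ * β₂ r + β₃ θ)
    (hβne : ∀ r ∈ Ir, ∀ θ ∈ Iθ, β r θ ≠ 0)
    (G : ℝ → ℝ → ℝ)
    (hG : ContDiffOn ℝ (⊤ : ℕ∞) (fun q : ℝ × ℝ => G q.1 q.2) (Ir ×ˢ Iθ))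
    (Gt : ℝ → ℝ → ℝ) (hGtdef : ∀ r θ, Gt r θ = G r θ * β r θ / β₁ θ) :
    -- integrability ↔ ∂_θ∂_r G̃ = 0
    ((∀ r ∈ Ir, ∀ θ ∈ Iθ,
        deriv (fun θ' => G r θ'
          + (deriv (fun r' => Real.log (β r' θ')) r)⁻¹
            * deriv (fun r' => G r' θ') r) θ = 0)
      ↔ (∀ r ∈ Ir, ∀ θ ∈ Iθ,
          deriv (fun θ' => deriv (fun r' => Gt r' θ') r) θ = 0))
    -- ∂_θ∂_r G̃ = 0 ↔ additive separation of G̃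
    ∧ ((∀ r ∈ Ir, ∀ θ ∈ Iθ,
          deriv (fun θ' => deriv (fun r' => Gt r' θ') r) θ = 0)
      ↔ (∃ Gr Gθ : ℝ → ℝ, ContDiffOn ℝ (⊤ : ℕ∞) Gr Ir ∧ ContDiffOn ℝ (⊤ : ℕ∞) Gθ Iθ ∧
          ∀ r ∈ Ir, ∀ θ ∈ Iθ, Gt r θ = Gr r + Gθ θ))
    -- the pointwise identity
    ∧ (∀ r ∈ Ir, ∀ θ ∈ Iθ,
        G r θ + (deriv (fun r' => Real.log (β r' θ)) r)⁻¹
            * deriv (fun r' => G r' θ) r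
          = deriv (fun r' => Gt r' θ) r / deriv β₂ r) := by
  have hSopen : IsOpen (Ir ×ˢ Iθ) := hIrOpen.prod hIθOpen
  -- smoothness of G̃ as a function of the pair
  have hGtc : ContDiffOn ℝ (⊤ : ℕ∞) (fun q : ℝ × ℝ => Gt q.1 q.2) (Ir ×ˢ Iθ) := by
    have h1 : ContDiffOn ℝ (⊤ : ℕ∞) (fun q : ℝ × ℝ => β₁ q.2) (Ir ×ˢ Iθ) :=
      hβ₁.comp contDiff_snd.contDiffOn (fun q hq => hq.2)
    have h3 : ContDiffOn ℝ (⊤ : ℕ∞) (fun q : ℝ × ℝ => β₃ q.2) (Ir ×ˢ Iθ) :=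
      hβ₃.comp contDiff_snd.contDiffOn (fun q hq => hq.2)
    have h2 : ContDiffOn ℝ (⊤ : ℕ∞) (fun q : ℝ × ℝ => β₂ q.1) (Ir ×ˢ Iθ) :=
      hβ₂.comp contDiff_fst.contDiffOn (fun q hq => hq.1)
    have heq : (fun q : ℝ × ℝ => Gt q.1 q.2)
        = fun q => G q.1 q.2 * (β₁ q.2 * β₂ q.1 + β₃ q.2) / β₁ q.2 := by
      funext q; rw [hGtdef, hβdef]
    rw [heq]
    exact (hG.mul ((h1.mul h2).add h3)).div h1 (fun q hq => hβ₁ne q.2 hq.2)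
  -- partial r-derivatives as applied Fréchet derivatives
  have keyDeriv : ∀ (f : ℝ × ℝ → ℝ), ContDiffOn ℝ (⊤ : ℕ∞) f (Ir ×ˢ Iθ) → ∀ r ∈ Ir, ∀ θ ∈ Iθ,
      HasDerivAt (fun r' => f (r', θ)) (fderiv ℝ f (r, θ) (1, 0)) r := by
    intro f hf r hr θ hθ
    have hfd : DifferentiableAt ℝ f (r, θ) :=
      (hf.differentiableOn (by simp)).differentiableAt (hSopen.mem_nhds ⟨hr, hθ⟩)
    have hline : HasDerivAt (fun r' : ℝ => (r', θ)) ((1 : ℝ), (0 : ℝ)) r :=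
      HasDerivAt.prodMk (hasDerivAt_id r) (hasDerivAt_const r θ)
    exact hfd.hasFDerivAt.comp_hasDerivAt r hline
  -- the applied partial derivative is smooth on the open product
  have hD : ContDiffOn ℝ (⊤ : ℕ∞) (fun q : ℝ × ℝ =>
      (fderiv ℝ (fun q : ℝ × ℝ => Gt q.1 q.2) q) (1, 0)) (Ir ×ˢ Iθ) :=
    (hGtc.fderiv_of_isOpen hSopen (by simp)).clm_apply contDiffOn_const
  have hβ₂d : ∀ r ∈ Ir, HasDerivAt β₂ (deriv β₂ r) r := fun r hr =>
    ((hβ₂.differentiableOn (by simp)).differentiableAt (hIrOpen.mem_nhds hr)).hasDerivAt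
  -- Part 3 : the pointwise identity
  have part3 : ∀ r ∈ Ir, ∀ θ ∈ Iθ,
      G r θ + (deriv (fun r' => Real.log (β r' θ)) r)⁻¹ * deriv (fun r' => G r' θ) r
        = deriv (fun r' => Gt r' θ) r / deriv β₂ r := by
    intro r hr θ hθ
    have hβd : HasDerivAt (fun r' => β r' θ) (β₁ θ * deriv β₂ r) r := by
      have heq : (fun r' => β r' θ) = fun r' => β₁ θ * β₂ r' + β₃ θ :=
        funext fun r' => hβdef r' θ
      rw [heq]
      exact ((hβ₂d r hr).const_mul (β₁ θ)).add_const (β₃ θ)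
    have hlog : deriv (fun r' => Real.log (β r' θ)) r = β₁ θ * deriv β₂ r / β r θ :=
      (hβd.log (hβne r hr θ hθ)).deriv
    have hGd : HasDerivAt (fun r' => G r' θ) (deriv (fun r' => G r' θ) r) r := by
      have h := (keyDeriv _ hG r hr θ hθ).differentiableAt
      exact h.hasDerivAt
    have hGtd : deriv (fun r' => Gt r' θ) r
        = (deriv (fun r' => G r' θ) r * β r θ + G r θ * (β₁ θ * deriv β₂ r)) / β₁ θ := by
      have heq : (fun r' => Gt r' θ) = fun r' => G r' θ * β r' θ / β₁ θ :=
        funext fun r' => hGtdef r' θ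
      rw [heq]
      exact ((hGd.mul hβd).div_const (β₁ θ)).deriv
    rw [hlog, hGtd]
    have h1 := hβ₁ne θ hθ
    have h2 := hβ₂' r hr
    have h3 := hβne r hr θ hθ
    field_simp
    ring
  -- Part 1 : the two θ-derivatives differ by the nonzero factor β₂'
  have part1eq : ∀ r ∈ Ir, ∀ θ ∈ Iθ,
      deriv (fun θ' => G r θ' + (deriv (fun r' => Real.log (β r' θ')) r)⁻¹
            * deriv (fun r' => G r' θ') r) θ
        = deriv (fun θ' => deriv (fun r' => Gt r' θ') r) θ / deriv β₂ r := by
    intro r hr θ hθ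
    have hev : (fun θ' => G r θ' + (deriv (fun r' => Real.log (β r' θ')) r)⁻¹
            * deriv (fun r' => G r' θ') r)
        =ᶠ[nhds θ] fun θ' => deriv (fun r' => Gt r' θ') r / deriv β₂ r := by
      filter_upwards [hIθOpen.mem_nhds hθ] with θ' hθ'
      exact part3 r hr θ' hθ'
    rw [hev.deriv_eq, deriv_div_const]
  refine ⟨⟨?_, ?_⟩, ⟨?_, ?_⟩, part3⟩
  · intro H r hr θ hθ
    have h := H r hr θ hθ
    rw [part1eq r hr θ hθ] at h
    rcases div_eq_zero_iff.mp h with h' | h'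
    · exact h'
    · exact absurd h' (hβ₂' r hr)
  · intro H r hr θ hθ
    rw [part1eq r hr θ hθ, H r hr θ hθ, zero_div]
  · -- ∂θ∂r G̃ = 0  →  additive separation
    intro H
    rcases Ir.eq_empty_or_nonempty with hIr | ⟨r₀, hr₀⟩
    · refine ⟨0, 0, contDiffOn_const, contDiffOn_const, fun r hr θ hθ => ?_⟩
      rw [hIr] at hr; exact absurd hr (Set.notMem_empty r)
    rcases Iθ.eq_empty_or_nonempty with hIθ | ⟨θ₀, hθ₀⟩
    · refine ⟨0, 0, contDiffOn_const, contDiffOn_const, fun r hr θ hθ => ?_⟩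
      rw [hIθ] at hθ; exact absurd hθ (Set.notMem_empty θ)
    refine ⟨fun r => Gt r θ₀ - Gt r₀ θ₀, fun θ => Gt r₀ θ, ?_, ?_, ?_⟩
    · exact (hGtc.comp (contDiff_id.prodMk contDiff_const).contDiffOn
        (fun r hr => ⟨hr, hθ₀⟩)).sub contDiffOn_const
    · exact hGtc.comp (contDiff_const.prodMk contDiff_id).contDiffOn (fun θ hθ => ⟨hr₀, hθ⟩)
    · intro r hr θ hθ
      -- the applied partial derivative is independent of θ
      have claim1 : ∀ r' ∈ Ir,
          fderiv ℝ (fun q : ℝ × ℝ => Gt q.1 q.2) (r', θ) (1, 0)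
            = fderiv ℝ (fun q : ℝ × ℝ => Gt q.1 q.2) (r', θ₀) (1, 0) := by
        intro r' hr'
        have hgd : ∀ θ'' ∈ Iθ, HasDerivAt
            (fun θ'' => fderiv ℝ (fun q : ℝ × ℝ => Gt q.1 q.2) (r', θ'') (1, 0)) 0 θ'' := by
          intro θ'' hθ''
          have hdiff : DifferentiableAt ℝ
              (fun θ'' => fderiv ℝ (fun q : ℝ × ℝ => Gt q.1 q.2) (r', θ'') (1, 0)) θ'' := by
            have hDdiff : DifferentiableAt ℝ (fun q : ℝ × ℝ =>
                fderiv ℝ (fun q : ℝ × ℝ => Gt q.1 q.2) q (1, 0)) (r', θ'') :=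
              (hD.differentiableOn (by simp)).differentiableAt (hSopen.mem_nhds ⟨hr', hθ''⟩)
            exact hDdiff.comp θ'' (DifferentiableAt.prodMk (differentiableAt_const r') differentiableAt_id)
          have hder : deriv
              (fun θ'' => fderiv ℝ (fun q : ℝ × ℝ => Gt q.1 q.2) (r', θ'') (1, 0)) θ'' = 0 := by
            have hev : (fun x => deriv (fun r'' => Gt r'' x) r') =ᶠ[nhds θ'']
                fun x => fderiv ℝ (fun q : ℝ × ℝ => Gt q.1 q.2) (r', x) (1, 0) := by
              filter_upwards [hIθOpen.mem_nhds hθ''] with x hx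
              exact (keyDeriv _ hGtc r' hr' x hx).deriv
            rw [← hev.deriv_eq]
            exact H r' hr' θ'' hθ''
          have h := hdiff.hasDerivAt
          rwa [hder] at h
        exact constOfDeriv (convex_iff_ordConnected.mpr hIθConn) hIθOpen hgd hθ hθ₀
      have claim2 : Gt r θ - Gt r θ₀ = Gt r₀ θ - Gt r₀ θ₀ := by
        have hf : ∀ r' ∈ Ir, HasDerivAt (fun r'' => Gt r'' θ - Gt r'' θ₀) 0 r' := by
          intro r' hr'
          have h1 := keyDeriv _ hGtc r' hr' θ hθ
          have h2 := keyDeriv _ hGtc r' hr' θ₀ hθ₀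
          have h12 := h1.sub h2
          rwa [claim1 r' hr', sub_self] at h12
        exact constOfDeriv (convex_iff_ordConnected.mpr hIrConn) hIrOpen hf hr hr₀
      show Gt r θ = Gt r θ₀ - Gt r₀ θ₀ + Gt r₀ θ
      linarith [claim2]
  · -- additive separation → ∂θ∂r G̃ = 0
    rintro ⟨Gr, Gθ, hGr, hGθ, hsum⟩ r hr θ hθ
    have haux : ∀ θ' ∈ Iθ, deriv (fun r' => Gt r' θ') r = deriv Gr r := by
      intro θ' hθ'
      have hev : (fun r' => Gt r' θ') =ᶠ[nhds r] fun r' => Gr r' + Gθ θ' := by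
        filter_upwards [hIrOpen.mem_nhds hr] with r' hr'
        exact hsum r' hr' θ' hθ'
      rw [hev.deriv_eq, deriv_add_const]
    have hev2 : (fun θ' => deriv (fun r' => Gt r' θ') r) =ᶠ[nhds θ]
        (fun _ => deriv Gr r) := by
      filter_upwards [hIθOpen.mem_nhds hθ] with θ' hθ' using haux θ' hθ'
    rw [hev2.deriv_eq, deriv_const]
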